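/- Let F be a field, m and E finite types, D a matrix over F with rows indexed by m and columns indexed by E; for S ⊆ E let r(S) be the rank of the submatrix of columns in S, and let T_D(X,Y) = Σ_{S ⊆ E} X^{r(E) − r(S)} · Y^{|S| − r(S)}. If σ ∈ E is a loop of D, i.e., the column Dσ is the zero vector, then T_D(X,Y) = (Y + 1) · T_{D∖σ}(X,Y), where D∖σ is the submatrix of D with columns E ∖ {σ}. -/

import Mathlib

/-! Split the subsets `S ⊆ E` according to whether they contain the loop `σ`. Adding a zero
vector to `S` leaves its rank unchanged and raises `|S|` by one, so `S` and `insert σ S`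
contribute `T` and `Y · T`, where `T` is the term of `S` in the polynomial of `D ∖ σ`. -/

open MvPolynomial

/-- The rank of the family of vectors `(v σ)_{σ ∈ S}`. -/
noncomputable def famRank (F : Type*) [Field F] {N : Type*} [AddCommGroup N] [Module F N]
    {E : Type*} (v : E → N) (S : Finset E) : ℕ :=
  Module.finrank F (Submodule.span F (v '' (S : Set E)))

/-- The corank–nullity (Tutte–Krushkal–Renardy) polynomial of a family of vectors:
`T_v(X,Y) = Σ_{S ⊆ E} X^(r(E) − r(S)) · Y^(|S| − r(S))`. -/
noncomputable def famTutte (F : Type*) [Field F] {N : Type*} [AddCommGroup N] [Module F N]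
    {E : Type*} [Fintype E] (v : E → N) : MvPolynomial (Fin 2) ℤ :=
  ∑ S : Finset E,
    X 0 ^ (famRank F v Finset.univ - famRank F v S) * X 1 ^ (S.card - famRank F v S)

theorem Finset.sum_finset_eq_sum_finset_subtype_ne {E M : Type*} [Fintype E] [DecidableEq E]
    [AddCommMonoid M] (σ : E) (g : Finset E → M) :
    ∑ S : Finset E, g S = ∑ T : Finset {x // x ≠ σ},
      (g (T.map (.subtype _)) + g (insert σ (T.map (.subtype _)))) := by
  have hσ : σ ∉ univ.erase σ := notMem_erase σ _
  rw [← powerset_univ, ← insert_erase (mem_univ σ), sum_powerset_insert hσ, ← sum_add_distrib]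
  refine sum_nbij' (·.subtype (· ≠ σ)) (·.map (.subtype _)) ?_ ?_ ?_ ?_ ?_
  · exact fun _ _ => mem_univ _
  · intro T _
    simpa [subset_iff] using fun x hx _ => hx
  · intro S hS
    exact subtype_map_of_mem fun x hx => ne_of_mem_erase (mem_powerset.mp hS hx)
  · intro T _
    exact map_injective (.subtype _) (subtype_map_of_mem fun _ => property_of_mem_map_subtype T)
  · intro S hS
    rw [subtype_map_of_mem fun x hx => ne_of_mem_erase (mem_powerset.mp hS hx)]

section

variable {F N : Type*} [Field F] [AddCommGroup N] [Module F N] {E : Type*}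

theorem famRank_le_card (v : E → N) (S : Finset E) : famRank F v S ≤ S.card := by
  have : v '' (S : Set E) = Set.range fun x : S => v x := by ext; simp
  unfold famRank
  rw [this]
  exact (finrank_range_le_card _).trans_eq (Fintype.card_coe S)

theorem famRank_map {E' : Type*} (f : E' ↪ E) (v : E → N) (S : Finset E') :
    famRank F v (S.map f) = famRank F (v ∘ f) S := by
  rw [famRank, famRank, Finset.coe_map, Set.image_comp]

theorem famRank_insert_of_eq_zero [DecidableEq E] {v : E → N} {σ : E} (hσ : v σ = 0)
    (S : Finset E) : famRank F v (insert σ S) = famRank F v S := by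
  rw [famRank, famRank, Finset.coe_insert, Set.image_insert_eq, hσ, Submodule.span_insert_zero]

theorem famTutte_eq_of_loop [Fintype E] [DecidableEq E] {v : E → N} {σ : E} (hσ : v σ = 0) :
    famTutte F v = (X 1 + 1) * famTutte F fun τ : {x // x ≠ σ} => v τ := by
  set ι : {x // x ≠ σ} ↪ E := .subtype _
  have hrank (T : Finset {x // x ≠ σ}) :
      famRank F v (T.map ι) = famRank F (fun τ : {x // x ≠ σ} => v τ) T :=
    famRank_map ι v T
  have hrank_univ :
      famRank F v .univ = famRank F (fun τ : {x // x ≠ σ} => v τ) .univ := by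
    have : (Finset.univ : Finset {x // x ≠ σ}).map ι = Finset.univ.erase σ := by ext; simp [ι]
    rw [← hrank, this, ← famRank_insert_of_eq_zero hσ (Finset.univ.erase σ),
      Finset.insert_erase (Finset.mem_univ σ)]
  rw [famTutte, famTutte, Finset.sum_finset_eq_sum_finset_subtype_ne σ, Finset.mul_sum]
  refine Finset.sum_congr rfl fun T _ => ?_
  have hσT : σ ∉ T.map ι := by simp [ι]
  rw [famRank_insert_of_eq_zero hσ, Finset.card_insert_of_notMem hσT, Finset.card_map, hrank,
    hrank_univ, Nat.succ_sub (famRank_le_card _ T), pow_succ]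
  ring

end

theorem statement9_general {F : Type*} [Field F] {m E : Type*} [Fintype E]
    [DecidableEq E] (D : Matrix m E F) (σ : E)
    (hloop : (fun i => D i σ) = (0 : m → F)) :
    famTutte F (fun τ i => D i τ)
      = (X 1 + 1) * famTutte F (fun (τ : {x : E // x ≠ σ}) (i : m) => D i (τ : E)) :=
  famTutte_eq_of_loop hloop

/-- if `σ ∈ E` is a loop of `D` (its column is the zero vector), then
`T_D(X,Y) = (Y + 1) · T_{D∖σ}(X,Y)`, where `D∖σ` is the submatrix of `D` with columns
`E ∖ {σ}`. -/
theorem statement9 {F : Type*} [Field F] {m E : Type*} [Fintype m] [Fintype E]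
    [DecidableEq E] (D : Matrix m E F) (σ : E)
    (hloop : (fun i => D i σ) = (0 : m → F)) :
    famTutte F (fun τ i => D i τ)
      = (X 1 + 1) * famTutte F (fun (τ : {x : E // x ≠ σ}) (i : m) => D i (τ : E)) :=
  statement9_general D σ hloop
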